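/- Let (a,b,c,d) ∈ P, let γ₁, γ₂ ∈ ℂ* with μ(γ₁) ≠ μ(γ₂), and let φ ∈ V_{μ(γ₁)} and ψ ∈ V_{μ(γ₂)}. Then for all integers k and n, the limit lim_{l→∞, m→∞} ⟨φ, conj(ψ)⟩_{k,l;m,n} exists and equals [D(φ, ψ)(z₊q^{n−1}) − D(φ, ψ)(z₋q^{k−1})] / (μ(γ₁) − μ(γ₂)), where conj(ψ) denotes the pointwise complex conjugate of ψ. -/

import Mathlib

open Complex Filter

noncomputable section

namespace VVBQJ

/-- The infinite q-shifted factorial `(x;q)_∞`. -/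
def poch (q x : ℂ) : ℂ := ∏' j : ℕ, (1 - x * q ^ j)

/-- The q-shifted factorial `(x;q)_n`, `n ∈ ℕ`. -/
def pochN (q x : ℂ) (n : ℕ) : ℂ := ∏ j ∈ Finset.range n, (1 - x * q ^ j)

/-- The normalized Jacobi theta function `θ(x) = (x;q)_∞ (q/x;q)_∞`. -/
def theta (q x : ℂ) : ℂ := poch q x * poch q (q / x)

/-- The condition on the pairs `(a,b)` and `(c,d)` in the parameter set `P`. -/
def pairCond (q zm zp : ℝ) (α β : ℂ) : Prop :=
  α = (starRingEnd ℂ) β ∨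
    (∃ (A B : ℝ) (k₀ : ℤ), α = (A : ℂ) ∧ β = (B : ℂ) ∧
      zp * q ^ k₀ < 1 / B ∧ 1 / B < 1 / A ∧ 1 / A < zp * q ^ (k₀ - 1)) ∨
    (∃ (A B : ℝ) (k₀ : ℤ), α = (A : ℂ) ∧ β = (B : ℂ) ∧
      zm * q ^ (k₀ - 1) < 1 / A ∧ 1 / A < 1 / B ∧ 1 / B < zm * q ^ k₀)

/-- The parameter domain `P`. -/
def memP (q zm zp : ℝ) (a b c d : ℂ) : Prop :=
  a ≠ 0 ∧ b ≠ 0 ∧ c ≠ 0 ∧ d ≠ 0 ∧ a ≠ b ∧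
    (∀ x ∈ ({a, b, c, d} : Set ℂ), ∀ k : ℤ,
      x ≠ ((zp : ℂ))⁻¹ * (q : ℂ) ^ k ∧ x ≠ ((zm : ℂ))⁻¹ * (q : ℂ) ^ k) ∧
    pairCond q zm zp a b ∧ pairCond q zm zp c d

/-- The generic parameter domain `P_gen`. -/
def memPgen (q zm zp : ℝ) (a b c d : ℂ) : Prop :=
  memP q zm zp a b c d ∧ c ≠ d ∧
    ∀ k : ℤ, c / a ≠ (q : ℂ) ^ k ∧ c / b ≠ (q : ℂ) ^ k ∧ d / a ≠ (q : ℂ) ^ k ∧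
      d / b ≠ (q : ℂ) ^ k ∧ c * d / (a * b) ≠ (q : ℂ) ^ k

/-- `s = √(cdq/(ab))`, with the principal branch of the square root. -/
def sP (q : ℝ) (a b c d : ℂ) : ℂ := (c * d * (q : ℂ) / (a * b)) ^ ((1 : ℂ) / 2)

def Acoef (q : ℝ) (a b c d : ℂ) (x : ℝ) : ℂ :=
  (sP q a b c d)⁻¹ * (1 - (q : ℂ) / (a * (x : ℂ))) * (1 - (q : ℂ) / (b * (x : ℂ)))

def Bcoef (q : ℝ) (a b c d : ℂ) (x : ℝ) : ℂ :=
  sP q a b c d * (1 - 1 / (c * (x : ℂ))) * (1 - 1 / (d * (x : ℂ)))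

def Ccoef (q : ℝ) (a b c d : ℂ) (x : ℝ) : ℂ :=
  sP q a b c d + (sP q a b c d)⁻¹ - Acoef q a b c d x - Bcoef q a b c d x

/-- The second order q-difference operator `L`. -/
def Lop (q : ℝ) (a b c d : ℂ) (f : ℝ → ℂ) (x : ℝ) : ℂ :=
  Acoef q a b c d x * f (x / q) + Bcoef q a b c d x * f (q * x) + Ccoef q a b c d x * f x

/-- The weight function `w`. -/
def w (q : ℝ) (a b c d : ℂ) (x : ℝ) : ℂ :=
  poch q (a * (x : ℂ)) * poch q (b * (x : ℂ)) / (poch q (c * (x : ℂ)) * poch q (d * (x : ℂ)))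

/-- The function `u(x) = (1-q)² B(x) x² w(x)`. -/
def u (q : ℝ) (a b c d : ℂ) (x : ℝ) : ℂ :=
  (1 - (q : ℂ)) ^ 2 * Bcoef q a b c d x * (x : ℂ) ^ 2 * w q a b c d x

/-- The Casorati determinant `D(f,g)`. -/
def casD (q : ℝ) (a b c d : ℂ) (f g : ℝ → ℂ) (x : ℝ) : ℂ :=
  (f x * g (q * x) - f (q * x) * g x) * u q a b c d x / ((1 - (q : ℂ)) * (x : ℂ))

/-- The truncated inner product `⟨f,g⟩_{k,l;m,n}`. -/
def trunc (q zm zp : ℝ) (a b c d : ℂ) (f g : ℝ → ℂ) (k l m n : ℤ) : ℂ :=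
  (1 - (q : ℂ)) *
    ((∑ j ∈ Finset.Icc n m, f (zp * q ^ j) * (starRingEnd ℂ) (g (zp * q ^ j)) *
        w q a b c d (zp * q ^ j) * ((zp * q ^ j : ℝ) : ℂ)) -
      ∑ j ∈ Finset.Icc k l, f (zm * q ^ j) * (starRingEnd ℂ) (g (zm * q ^ j)) *
        w q a b c d (zm * q ^ j) * ((zm * q ^ j : ℝ) : ℂ))

/-- The constant `K_z`. -/
def Kz (q : ℝ) (a b c d : ℂ) (z : ℝ) : ℂ :=
  (z : ℂ) * (1 - (q : ℂ)) * (theta q (a * z) * theta q (b * z)) /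
    (theta q (c * z) * theta q (d * z))

/-- Membership in the Hilbert space `ℒ²(ℝ_q, w(x) d_q x)`. -/
def memL2 (q zm zp : ℝ) (a b c d : ℂ) (f : ℝ → ℂ) : Prop :=
  Summable (fun k : ℤ => ‖f (zp * q ^ k)‖ ^ 2 * ‖w q a b c d (zp * q ^ k)‖ * |zp * q ^ k|) ∧
    Summable (fun k : ℤ => ‖f (zm * q ^ k)‖ ^ 2 * ‖w q a b c d (zm * q ^ k)‖ * |zm * q ^ k|)

/-- The inner product on `ℒ²`. -/
def innerL2 (q zm zp : ℝ) (a b c d : ℂ) (f g : ℝ → ℂ) : ℂ :=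
  (1 - (q : ℂ)) *
    ((∑' k : ℤ, f (zp * q ^ k) * (starRingEnd ℂ) (g (zp * q ^ k)) *
        w q a b c d (zp * q ^ k) * ((zp * q ^ k : ℝ) : ℂ)) -
      ∑' k : ℤ, f (zm * q ^ k) * (starRingEnd ℂ) (g (zm * q ^ k)) *
        w q a b c d (zm * q ^ k) * ((zm * q ^ k : ℝ) : ℂ))

/-- The squared `ℒ²`-norm. -/
def normSqL2 (q zm zp : ℝ) (a b c d : ℂ) (f : ℝ → ℂ) : ℝ :=
  (1 - q) *
    ((∑' k : ℤ, ‖f (zp * q ^ k)‖ ^ 2 * ‖w q a b c d (zp * q ^ k)‖ * (zp * q ^ k)) +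
      ∑' k : ℤ, ‖f (zm * q ^ k)‖ ^ 2 * ‖w q a b c d (zm * q ^ k)‖ * (-(zm * q ^ k)))

/-- The q-difference operator `D_q`. -/
def Dq (q : ℝ) (f : ℝ → ℂ) (x : ℝ) : ℂ := (f x - f (q * x)) / ((1 - (q : ℂ)) * (x : ℂ))

/-- The q-line `ℝ_q`. -/
def Rq (q zm zp : ℝ) : Set ℝ := {x | ∃ k : ℤ, x = zm * q ^ k ∨ x = zp * q ^ k}

/-- Membership in the domain `𝒟`. -/
def memD (q zm zp : ℝ) (a b c d : ℂ) (f : ℝ → ℂ) : Prop :=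
  memL2 q zm zp a b c d f ∧ memL2 q zm zp a b c d (Lop q a b c d f) ∧
    (∃ v : ℂ, Tendsto (fun k : ℕ => f (zm * q ^ k)) atTop (nhds v) ∧
        Tendsto (fun k : ℕ => f (zp * q ^ k)) atTop (nhds v)) ∧
    (∃ v : ℂ, Tendsto (fun k : ℕ => Dq q f (zm * q ^ k)) atTop (nhds v) ∧
        Tendsto (fun k : ℕ => Dq q f (zp * q ^ k)) atTop (nhds v))

/-- Membership in the eigenspace `V_μ` (functions on `ℝ_q`). -/
def memV (q zm zp : ℝ) (a b c d : ℂ) (μ : ℂ) (f : ℝ → ℂ) : Prop :=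
  (∀ x ∈ Rq q zm zp, Lop q a b c d f x = μ * f x) ∧
    (∃ v : ℂ, Tendsto (fun k : ℕ => f (zm * q ^ k)) atTop (nhds v) ∧
        Tendsto (fun k : ℕ => f (zp * q ^ k)) atTop (nhds v)) ∧
    (∃ v : ℂ, Tendsto (fun k : ℕ => Dq q f (zm * q ^ k)) atTop (nhds v) ∧
        Tendsto (fun k : ℕ => Dq q f (zp * q ^ k)) atTop (nhds v))

/-- The set of regular spectral values `S_reg = ℂ* \ {± q^{k/2}}`. -/
def Sreg (q : ℝ) (γ : ℂ) : Prop :=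
  γ ≠ 0 ∧ ∀ k : ℤ, γ ≠ ((q ^ ((k : ℝ) / 2) : ℝ) : ℂ) ∧ γ ≠ -((q ^ ((k : ℝ) / 2) : ℝ) : ℂ)

/-- The big q-Jacobi function `φ_γ(x)`. -/
def phi (q : ℝ) (a b c d : ℂ) (γ x : ℂ) : ℂ :=
  ∑' n : ℕ,
    pochN q (q / (a * x)) n * pochN q (sP q a b c d * γ) n * pochN q (sP q a b c d / γ) n /
      (pochN q q n * pochN q (c * q / a) n * pochN q (d * q / a) n) * (b * x) ^ n

/-- The asymptotic solution `Φ_γ(z q^{-k})`, in index form. -/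
def PhiIdx (q : ℝ) (a b c d : ℂ) (γ : ℂ) (z : ℝ) (k : ℤ) : ℂ :=
  let s : ℂ := sP q a b c d
  let x : ℂ := (z : ℂ) * (q : ℂ) ^ (-k)
  (s * γ) ^ k *
    (poch q ((q : ℂ) / (b * x)) * poch q ((q : ℂ) ^ 2 * γ / (a * s * x)) /
      (poch q ((q : ℂ) / (c * x)) * poch q ((q : ℂ) / (d * x)))) *
    ∑' n : ℕ,
      pochN q ((q : ℂ) * γ / s) n * pochN q (c * q * γ / (s * a)) n *
          pochN q (d * q * γ / (s * a)) n /
        (pochN q q n * pochN q ((q : ℂ) ^ 2 * γ / (a * s * x)) n * pochN q ((q : ℂ) * γ ^ 2) n) *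
        ((q : ℂ) / (b * x)) ^ n

/-- Casorati determinant at `x = z q^{-k}` for index-form functions. -/
def casDIdx (q : ℝ) (a b c d : ℂ) (f g : ℤ → ℂ) (z : ℝ) (k : ℤ) : ℂ :=
  (f k * g (k - 1) - f (k - 1) * g k) * u q a b c d (z * q ^ (-k)) /
    ((1 - (q : ℂ)) * ((z * q ^ (-k) : ℝ) : ℂ))

/-- The c-function `c_z(γ)`. -/
def cz (q : ℝ) (a b c d : ℂ) (z : ℝ) (γ : ℂ) : ℂ :=
  let s : ℂ := sP q a b c d
  poch q (s / γ) * poch q (c * q / (a * s * γ)) * poch q (d * q / (a * s * γ)) *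
      theta q (b * s * z * γ) /
    (poch q (c * q / a) * poch q (d * q / a) * poch q (1 / γ ^ 2) * theta q (b * z))

/-- The expansion coefficient `d_z(γ)`. -/
def dz (q : ℝ) (a b c d : ℂ) (z : ℝ) (γ : ℂ) : ℂ :=
  let s : ℂ := sP q a b c d
  (poch q (c * q / a) * poch q (d * q / a) * theta q (b * z) /
      (theta q (a / b) * theta q (c * z) * theta q (d * z))) *
    (poch q (c * q * γ / (s * b)) * poch q (d * q * γ / (s * b)) *
        theta q (a * s * z / (q * γ)) /
      (poch q (q * γ ^ 2) * poch q (s / γ)))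

/-- The Casorati determinant `v(γ) = D(Φ_γ^+, Φ_γ^-)`. -/
def vFun (q zm zp : ℝ) (a b c d : ℂ) (γ : ℂ) : ℂ :=
  let s : ℂ := sP q a b c d;
  -((zp : ℂ) * (1 - (q : ℂ)) * theta q ((zm : ℂ) / zp) /
      (theta q (c * zm) * theta q (d * zm) * theta q (c * zp) * theta q (d * zp))) *
    (poch q (c * q * γ / (a * s)) * poch q (d * q * γ / (a * s)) * poch q (c * q * γ / (b * s)) *
        poch q (d * q * γ / (b * s)) * poch q (s * γ) * poch q (q * γ / s) *
        theta q (a * b * s * zm * zp / (q * γ)) /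
      (γ * (poch q (q * γ ^ 2)) ^ 2))

/-- The function `v₁(γ)` in the continuous part of the spectral measure. -/
def v1Fun (q zm zp : ℝ) (a b c d : ℂ) (γ : ℂ) : ℂ :=
  let s : ℂ := sP q a b c d
  ((poch q (c * q / a)) ^ 2 * (poch q (d * q / a)) ^ 2 * theta q (b * zp) * theta q (b * zm) /
      ((1 - (q : ℂ)) * a * b * (zm : ℂ) ^ 2 * (zp : ℂ) ^ 2 *
        (theta q ((zm : ℂ) / zp) * theta q ((zp : ℂ) / zm) * theta q (a / b) * theta q (b / a)))) *
    (poch q (γ ^ 2) * poch q (γ⁻¹ ^ 2) /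
      (poch q (s * γ) * poch q (s / γ) * poch q (c * q * γ / (a * s)) *
        poch q (c * q / (a * s * γ)) * poch q (d * q * γ / (a * s)) *
        poch q (d * q / (a * s * γ)) *
        (theta q (s * γ) * theta q (s / γ) * theta q (a * b * s * zm * zp * γ) *
          theta q (a * b * s * zm * zp / γ)))) *
    ((zm : ℂ) * (theta q (a * zp) * theta q (c * zp) * theta q (d * zp) * theta q (b * zm) *
          theta q (a * s * zm * γ) * theta q (a * s * zm / γ)) -
      (zp : ℂ) * (theta q (a * zm) * theta q (c * zm) * theta q (d * zm) * theta q (b * zp) *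
          theta q (a * s * zp * γ) * theta q (a * s * zp / γ)))

/-- The function `v₂(γ)` in the continuous part of the spectral measure. -/
def v2Fun (q zm zp : ℝ) (a b c d : ℂ) (γ : ℂ) : ℂ :=
  let s : ℂ := sP q a b c d
  (poch q (c * q / a) * poch q (d * q / a) * poch q (c * q / b) * poch q (d * q / b) *
      (theta q (a * zp) * theta q (a * zm) * theta q (b * zp) * theta q (b * zm) *
        theta q (c * d * zm * zp)) /
      (a * b * (zm : ℂ) ^ 2 * (zp : ℂ) * (1 - (q : ℂ)) *
        (theta q ((zp : ℂ) / zm) * theta q (a / b) * theta q (b / a)))) *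
    (poch q (γ ^ 2) * poch q (γ⁻¹ ^ 2) /
      (poch q (s * γ) * poch q (s / γ) *
        (theta q (s * γ) * theta q (s / γ) * theta q (a * b * s * zm * zp * γ) *
          theta q (a * b * s * zm * zp / γ))))

/-- The function `u₁(γ)`. -/
def u1Fun (q zm zp : ℝ) (a b c d : ℂ) (γ : ℂ) : ℂ :=
  Kz q a b c d zp * cz q a b c d zp γ * cz q a b c d zp γ⁻¹ -
    Kz q a b c d zm * cz q a b c d zm γ * cz q a b c d zm γ⁻¹

/-- The function `u₂(γ)`. -/
def u2Fun (q zm zp : ℝ) (a b c d : ℂ) (γ : ℂ) : ℂ :=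
  Kz q a b c d zp * cz q a b c d zp γ * cz q b a c d zp γ⁻¹ -
    Kz q a b c d zm * cz q a b c d zm γ * cz q b a c d zm γ⁻¹

/-- The big q-Jacobi polynomial `P_k(y; α, β, δ; q)`. -/
def bigqJacobiP (q : ℝ) (α β δ : ℂ) (k : ℕ) (y : ℂ) : ℂ :=
  ∑ j ∈ Finset.range (k + 1),
    pochN q (((q : ℂ) ^ k)⁻¹) j * pochN q (α * β * (q : ℂ) ^ (k + 1)) j * pochN q y j /
      (pochN q q j * pochN q (α * q) j * pochN q (δ * q) j) * (q : ℂ) ^ j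

/-!
The weight satisfies the Pearson equation `q A(x) w(x) = B(x/q) w(x/q)`, a consequence of
`(x;q)_∞ = (1 - x) (qx;q)_∞` and `s² = cdq/(ab)`. With it, `ψ Lφ - φ Lψ`, weighted by
`(1 - q) x w(x)`, telescopes: at every lattice point
`(μ₁ - μ₂) (1 - q) x φ(x) ψ(x) w(x) = D(φ,ψ)(x/q) - D(φ,ψ)(x)`.
Summing over a truncated half-lattice leaves the Casorati determinants at its two ends. As
`x → 0±`, `x² B(x) → s/(cd)` and `w(x) → 1`, so `D(φ,ψ)` tends to
`(1 - q)² s/(cd) (φ'(0) ψ(0) - φ(0) ψ'(0))` from both sides; the continuity conditions in `V_μ`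
make the two inner boundary terms cancel in the limit.
-/

open Finset Topology

section QPochhammer

variable {Q : ℂ}

lemma multipliable_one_sub_mul_pow (hQ : ‖Q‖ < 1) (y : ℂ) :
    Multipliable fun j : ℕ => 1 - y * Q ^ j := by
  have h := Complex.multipliable_one_add_of_summable
    ((summable_geometric_of_norm_lt_one hQ).mul_left (-y))
  simpa only [neg_mul, ← sub_eq_add_neg] using h

lemma pochN_mul_poch_mul_pow (hQ : ‖Q‖ < 1) (y : ℂ) (k : ℕ) :
    pochN Q y k * poch Q (y * Q ^ k) = poch Q y := by
  have hshift : ∀ j : ℕ, 1 - y * Q ^ k * Q ^ j = 1 - y * Q ^ (j + k) := fun j => by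
    rw [pow_add, mul_assoc, mul_comm (Q ^ j)]
  have h := (multipliable_one_sub_mul_pow hQ (y * Q ^ k)).congr hshift
  rw [pochN, poch, poch, ← Multipliable.prod_mul_tprod_nat_mul' (f := fun j => 1 - y * Q ^ j) h]
  simp only [hshift]

lemma poch_eq_one_sub_mul_poch (hQ : ‖Q‖ < 1) (y : ℂ) :
    poch Q y = (1 - y) * poch Q (y * Q) := by
  simpa [pochN] using (pochN_mul_poch_mul_pow hQ y 1).symm

lemma poch_ne_zero (hQ : ‖Q‖ < 1) {y : ℂ} (hy : ∀ j : ℕ, y * Q ^ j ≠ 1) : poch Q y ≠ 0 := by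
  have h := tprod_one_add_ne_zero_of_summable (f := fun j : ℕ => -(y * Q ^ j))
    (fun j => by rw [← sub_eq_add_neg, sub_ne_zero]; exact (hy j).symm)
    (by simpa only [norm_neg] using ((summable_geometric_of_norm_lt_one hQ).mul_left y).norm)
  rw [poch]
  simpa only [← sub_eq_add_neg] using h

lemma tendsto_poch_mul_pow (hQ : ‖Q‖ < 1) {y : ℂ} (hy : ∀ j : ℕ, y * Q ^ j ≠ 1) :
    Tendsto (fun k : ℕ => poch Q (y * Q ^ k)) atTop (𝓝 1) := by
  have hpochN : Tendsto (pochN Q y) atTop (𝓝 (poch Q y)) :=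
    (multipliable_one_sub_mul_pow hQ y).hasProd.tendsto_prod_nat
  have h := (tendsto_const_nhds (x := poch Q y)).div hpochN (poch_ne_zero hQ hy)
  rw [div_self (poch_ne_zero hQ hy)] at h
  refine h.congr fun k => ?_
  rw [Pi.div_apply, ← pochN_mul_poch_mul_pow hQ y k, mul_div_cancel_left₀]
  exact prod_ne_zero_iff.2 fun j _ => sub_ne_zero.2 (hy j).symm

end QPochhammer

section DifferenceOperator

variable {q : ℝ} {a b c d : ℂ}

lemma sP_sq (q : ℝ) (a b c d : ℂ) : sP q a b c d ^ 2 = c * d * q / (a * b) := by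
  rw [sP, one_div]
  exact Complex.cpow_ofNat_inv_pow _ 2

lemma w_div (hq0 : 0 < q) (hq1 : q < 1) (x : ℝ) :
    w q a b c d (x / q) =
      (1 - a * x / q) * (1 - b * x / q) / ((1 - c * x / q) * (1 - d * x / q)) * w q a b c d x := by
  have hQ : ‖(q : ℂ)‖ < 1 := by rwa [Complex.norm_real, Real.norm_of_nonneg hq0.le]
  have hrec : ∀ α : ℂ, poch q (α * ((x / q : ℝ) : ℂ)) = (1 - α * x / q) * poch q (α * x) := by
    intro α
    rw [poch_eq_one_sub_mul_poch hQ]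
    have hq : (q : ℂ) ≠ 0 := by exact_mod_cast hq0.ne'
    push_cast
    congr 2 <;> field_simp
  rw [w, w, hrec, hrec, hrec, hrec, mul_mul_mul_comm, mul_mul_mul_comm (1 - c * x / q),
    mul_div_mul_comm]

lemma q_mul_Acoef_mul_w (hq0 : 0 < q) (hq1 : q < 1) (ha : a ≠ 0) (hb : b ≠ 0) (hc : c ≠ 0)
    (hd : d ≠ 0) {x : ℝ} (hx : x ≠ 0) (hcx : c * x ≠ q) (hdx : d * x ≠ q) :
    q * Acoef q a b c d x * w q a b c d x = Bcoef q a b c d (x / q) * w q a b c d (x / q) := by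
  have hq : (q : ℂ) ≠ 0 := by exact_mod_cast hq0.ne'
  have hxC : (x : ℂ) ≠ 0 := by exact_mod_cast hx
  have hs : sP q a b c d ≠ 0 := by
    intro h
    have h2 := sP_sq q a b c d
    rw [h, zero_pow two_ne_zero] at h2
    exact div_ne_zero (mul_ne_zero (mul_ne_zero hc hd) hq) (mul_ne_zero ha hb) h2.symm
  have hcx' : (q : ℂ) - x * c ≠ 0 := by rw [sub_ne_zero, mul_comm]; exact hcx.symm
  have hdx' : (q : ℂ) - x * d ≠ 0 := by rw [sub_ne_zero, mul_comm]; exact hdx.symm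
  rw [w_div hq0 hq1, ← mul_assoc]
  congr 1
  rw [Acoef, Bcoef]
  push_cast
  field_simp
  have hs2 : sP q a b c d ^ 2 * (a * b) = c * d * q := by
    rw [sP_sq]; field_simp
  linear_combination (-(x * c - q) * (x * d - q) * (q - a * x) * (q - x * b)) * hs2

lemma casD_eq (hq1 : q ≠ 1) (φ ψ : ℝ → ℂ) {x : ℝ} (hx : x ≠ 0) :
    casD q a b c d φ ψ x =
      (1 - q) * x * Bcoef q a b c d x * w q a b c d x * (φ x * ψ (q * x) - φ (q * x) * ψ x) := by
  have h1q : (1 : ℂ) - q ≠ 0 := sub_ne_zero.2 (by exact_mod_cast hq1.symm)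
  have hxC : (x : ℂ) ≠ 0 := by exact_mod_cast hx
  rw [casD, u]
  field_simp

lemma casD_div_sub_casD (hq0 : 0 < q) (hq1 : q < 1) (ha : a ≠ 0) (hb : b ≠ 0) (hc : c ≠ 0)
    (hd : d ≠ 0) {x : ℝ} (hx : x ≠ 0) (hcx : c * x ≠ q) (hdx : d * x ≠ q) {φ ψ : ℝ → ℂ}
    {μ₁ μ₂ : ℂ} (hφ : Lop q a b c d φ x = μ₁ * φ x) (hψ : Lop q a b c d ψ x = μ₂ * ψ x) :
    casD q a b c d φ ψ (x / q) - casD q a b c d φ ψ x =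
      (1 - q) * (μ₁ - μ₂) * (φ x * ψ x * w q a b c d x * x) := by
  have hq : (q : ℂ) ≠ 0 := by exact_mod_cast hq0.ne'
  have hpearson : ((x / q : ℝ) : ℂ) * (Bcoef q a b c d (x / q) * w q a b c d (x / q)) =
      x * Acoef q a b c d x * w q a b c d x := by
    rw [← q_mul_Acoef_mul_w hq0 hq1 ha hb hc hd hx hcx hdx]
    push_cast
    field_simp
  rw [casD_eq hq1.ne _ _ (div_ne_zero hx hq0.ne'), casD_eq hq1.ne _ _ hx, mul_div_cancel₀ x hq0.ne']
  rw [Lop, Ccoef] at hφ hψ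
  linear_combination (1 - q) * x * w q a b c d x * (ψ x * hφ - φ x * hψ) +
    (1 - q) * (φ (x / q) * ψ x - φ x * ψ (x / q)) * hpearson

lemma casD_eq_Dq (hq1 : q ≠ 1) (φ ψ : ℝ → ℂ) {x : ℝ} (hx : x ≠ 0) :
    casD q a b c d φ ψ x = (1 - q) ^ 2 * ((x : ℂ) ^ 2 * Bcoef q a b c d x) * w q a b c d x *
      (Dq q φ x * ψ (q * x) - φ (q * x) * Dq q ψ x) := by
  have h1q : (1 : ℂ) - q ≠ 0 := sub_ne_zero.2 (by exact_mod_cast hq1.symm)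
  have hxC : (x : ℂ) ≠ 0 := by exact_mod_cast hx
  rw [casD, u, Dq, Dq]
  field_simp
  ring

lemma tendsto_sq_mul_Bcoef (q : ℝ) (a b c d : ℂ) :
    Tendsto (fun x : ℝ => (x : ℂ) ^ 2 * Bcoef q a b c d x) (𝓝[≠] 0)
      (𝓝 (sP q a b c d / (c * d))) := by
  have hcont : Tendsto (fun x : ℝ => sP q a b c d * (x - c⁻¹) * (x - d⁻¹)) (𝓝 0)
      (𝓝 (sP q a b c d * (0 - c⁻¹) * (0 - d⁻¹))) := by
    have : Continuous fun x : ℝ => sP q a b c d * (x - c⁻¹) * (x - d⁻¹) := by fun_prop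
    simpa using this.tendsto 0
  rw [show sP q a b c d / (c * d) = sP q a b c d * (0 - c⁻¹) * (0 - d⁻¹) by ring]
  refine (hcont.mono_left nhdsWithin_le_nhds).congr' ?_
  filter_upwards [self_mem_nhdsWithin] with x hx
  have hxC : (x : ℂ) * (x : ℂ)⁻¹ = 1 := mul_inv_cancel₀ (by exact_mod_cast hx)
  rw [Bcoef, one_div, one_div, mul_inv, mul_inv]
  linear_combination sP q a b c d * (x * (c⁻¹ + d⁻¹) - c⁻¹ * d⁻¹ * (x * (x : ℂ)⁻¹ + 1)) * hxC

end DifferenceOperator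

lemma sum_Icc_sub_telescope {M : Type*} [AddCommGroup M] (g : ℤ → M) {n m : ℤ}
    (hnm : n - 1 ≤ m) : ∑ j ∈ Icc n m, (g (j - 1) - g j) = g (n - 1) - g m := by
  induction m, hnm using Int.leInduction with
  | base => simp
  | succ m hm ih =>
    rw [← insert_Icc_right_eq_Icc_add_one (by omega), sum_insert (by simp), ih,
      add_sub_cancel_right]
    abel

section Lattice

variable {q z : ℝ} {a b c d : ℂ} {φ ψ : ℝ → ℂ}

lemma mul_zpow_ne_one {α : ℂ} (hα : ∀ k : ℤ, α ≠ (z : ℂ)⁻¹ * (q : ℂ) ^ k) (j : ℤ) :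
    α * ((z * q ^ j : ℝ) : ℂ) ≠ 1 := by
  intro h
  apply hα (-j)
  rw [eq_inv_of_mul_eq_one_left h]
  push_cast
  rw [mul_inv, zpow_neg]

lemma tendsto_w_mul_pow (hq0 : 0 < q) (hq1 : q < 1)
    (hpoles : ∀ α ∈ ({a, b, c, d} : Set ℂ), ∀ k : ℤ, α ≠ (z : ℂ)⁻¹ * (q : ℂ) ^ k) :
    Tendsto (fun k : ℕ => w q a b c d (z * q ^ k)) atTop (𝓝 1) := by
  have hQ : ‖(q : ℂ)‖ < 1 := by rwa [Complex.norm_real, Real.norm_of_nonneg hq0.le]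
  have hpoch : ∀ α ∈ ({a, b, c, d} : Set ℂ),
      Tendsto (fun k : ℕ => poch q (α * ((z * q ^ k : ℝ) : ℂ))) atTop (𝓝 1) := by
    intro α hα
    have hy : ∀ j : ℕ, α * z * (q : ℂ) ^ j ≠ 1 := fun j => by
      simpa [mul_assoc] using mul_zpow_ne_one (hpoles α hα) j
    refine (tendsto_poch_mul_pow hQ hy).congr fun k => ?_
    push_cast
    ring_nf
  have h := ((hpoch a (by simp)).mul (hpoch b (by simp))).div
    ((hpoch c (by simp)).mul (hpoch d (by simp))) (by norm_num)
  rwa [mul_one, div_one] at h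

lemma tendsto_casD_mul_zpow (hq0 : 0 < q) (hq1 : q < 1) (hz : z ≠ 0)
    (hpoles : ∀ α ∈ ({a, b, c, d} : Set ℂ), ∀ k : ℤ, α ≠ (z : ℂ)⁻¹ * (q : ℂ) ^ k)
    {φ₀ ψ₀ φ₁ ψ₁ : ℂ}
    (hφ₀ : Tendsto (fun k : ℕ => φ (z * q ^ k)) atTop (𝓝 φ₀))
    (hψ₀ : Tendsto (fun k : ℕ => ψ (z * q ^ k)) atTop (𝓝 ψ₀))
    (hφ₁ : Tendsto (fun k : ℕ => Dq q φ (z * q ^ k)) atTop (𝓝 φ₁))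
    (hψ₁ : Tendsto (fun k : ℕ => Dq q ψ (z * q ^ k)) atTop (𝓝 ψ₁)) :
    Tendsto (fun j : ℤ => casD q a b c d φ ψ (z * q ^ j)) atTop
      (𝓝 ((1 - q) ^ 2 * (sP q a b c d / (c * d)) * (φ₁ * ψ₀ - φ₀ * ψ₁))) := by
  have hx : Tendsto (fun k : ℕ => z * q ^ k) atTop (𝓝[≠] 0) := by
    refine tendsto_nhdsWithin_iff.2 ⟨?_, .of_forall fun k => mul_ne_zero hz (by positivity)⟩
    simpa using (tendsto_pow_atTop_nhds_zero_of_lt_one hq0.le hq1).const_mul z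
  have hshift : ∀ f : ℝ → ℂ, ∀ v, Tendsto (fun k : ℕ => f (z * q ^ k)) atTop (𝓝 v) →
      Tendsto (fun k : ℕ => f (q * (z * q ^ k))) atTop (𝓝 v) := fun f v hf =>
    (hf.comp (tendsto_add_atTop_nat 1)).congr fun k => by
      simp only [Function.comp, pow_succ]; ring_nf
  have h := ((tendsto_const_nhds (x := ((1 : ℂ) - q) ^ 2)).mul
    ((tendsto_sq_mul_Bcoef q a b c d).comp hx)).mul (tendsto_w_mul_pow hq0 hq1 hpoles) |>.mul
    ((hφ₁.mul (hshift ψ ψ₀ hψ₀)).sub ((hshift φ φ₀ hφ₀).mul hψ₁))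
  rw [mul_one] at h
  rw [← Nat.map_cast_int_atTop, tendsto_map'_iff]
  refine h.congr fun k => ?_
  simp only [Function.comp, zpow_natCast]
  rw [casD_eq_Dq hq1.ne _ _ (mul_ne_zero hz (by positivity))]

lemma green_formula_Icc (hq0 : 0 < q) (hq1 : q < 1) (ha : a ≠ 0) (hb : b ≠ 0) (hc : c ≠ 0)
    (hd : d ≠ 0) (hz : z ≠ 0) (hcz : ∀ k : ℤ, c ≠ (z : ℂ)⁻¹ * (q : ℂ) ^ k)
    (hdz : ∀ k : ℤ, d ≠ (z : ℂ)⁻¹ * (q : ℂ) ^ k) {μ₁ μ₂ : ℂ}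
    (hφ : ∀ j : ℤ, Lop q a b c d φ (z * q ^ j) = μ₁ * φ (z * q ^ j))
    (hψ : ∀ j : ℤ, Lop q a b c d ψ (z * q ^ j) = μ₂ * ψ (z * q ^ j)) {n m : ℤ}
    (hnm : n - 1 ≤ m) :
    (1 - q) * (μ₁ - μ₂) * ∑ j ∈ Icc n m,
        φ (z * q ^ j) * ψ (z * q ^ j) * w q a b c d (z * q ^ j) * ((z * q ^ j : ℝ) : ℂ) =
      casD q a b c d φ ψ (z * q ^ (n - 1)) - casD q a b c d φ ψ (z * q ^ m) := by
  rw [mul_sum, ← sum_Icc_sub_telescope (fun j => casD q a b c d φ ψ (z * q ^ j)) hnm]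
  refine sum_congr rfl fun j _ => ?_
  have hdiv : z * q ^ j / q = z * q ^ (j - 1) := by
    rw [zpow_sub_one₀ hq0.ne', mul_div_assoc, div_eq_mul_inv]
  have hpole : ∀ α : ℂ, (∀ k : ℤ, α ≠ (z : ℂ)⁻¹ * (q : ℂ) ^ k) →
      α * ((z * q ^ j : ℝ) : ℂ) ≠ q := fun α hα h => by
    apply mul_zpow_ne_one hα (j - 1)
    rw [← hdiv]
    push_cast at h ⊢
    rw [← mul_div_assoc, h, div_self (by exact_mod_cast hq0.ne')]
  rw [← hdiv, casD_div_sub_casD hq0 hq1 ha hb hc hd (mul_ne_zero hz (by positivity))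
    (hpole c hcz) (hpole d hdz) (hφ j) (hψ j)]

lemma tendsto_green_sum_Icc (hq0 : 0 < q) (hq1 : q < 1) (ha : a ≠ 0) (hb : b ≠ 0) (hc : c ≠ 0)
    (hd : d ≠ 0) (hz : z ≠ 0) (hcz : ∀ k : ℤ, c ≠ (z : ℂ)⁻¹ * (q : ℂ) ^ k)
    (hdz : ∀ k : ℤ, d ≠ (z : ℂ)⁻¹ * (q : ℂ) ^ k) {μ₁ μ₂ : ℂ}
    (hφ : ∀ j : ℤ, Lop q a b c d φ (z * q ^ j) = μ₁ * φ (z * q ^ j))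
    (hψ : ∀ j : ℤ, Lop q a b c d ψ (z * q ^ j) = μ₂ * ψ (z * q ^ j)) (hμ : μ₁ ≠ μ₂) {L : ℂ}
    (hL : Tendsto (fun j : ℤ => casD q a b c d φ ψ (z * q ^ j)) atTop (𝓝 L)) (n : ℤ) :
    Tendsto (fun m : ℤ => (1 - q) * ∑ j ∈ Icc n m,
        φ (z * q ^ j) * ψ (z * q ^ j) * w q a b c d (z * q ^ j) * ((z * q ^ j : ℝ) : ℂ)) atTop
      (𝓝 ((casD q a b c d φ ψ (z * q ^ (n - 1)) - L) / (μ₁ - μ₂))) := by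
  refine ((tendsto_const_nhds.sub hL).div_const _).congr' ?_
  filter_upwards [eventually_ge_atTop (n - 1)] with m hm
  rw [← green_formula_Icc hq0 hq1 ha hb hc hd hz hcz hdz hφ hψ hm, mul_right_comm,
    mul_div_cancel_right₀ _ (sub_ne_zero.2 hμ)]

end Lattice

theorem statement18_general (q zm zp : ℝ) (a b c d : ℂ)
    (hq0 : 0 < q) (hq1 : q < 1) (hzm : zm < 0) (hzp : 0 < zp)
    (hP : memP q zm zp a b c d) (γ₁ γ₂ : ℂ)
    (hμ : γ₁ + γ₁⁻¹ ≠ γ₂ + γ₂⁻¹) (φ ψ : ℝ → ℂ)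
    (hφ : memV q zm zp a b c d (γ₁ + γ₁⁻¹) φ)
    (hψ : memV q zm zp a b c d (γ₂ + γ₂⁻¹) ψ) (k n : ℤ) :
    Tendsto
      (fun lm : ℤ × ℤ =>
        trunc q zm zp a b c d φ (fun x => (starRingEnd ℂ) (ψ x)) k lm.1 lm.2 n)
      atTop
      (nhds ((casD q a b c d φ ψ (zp * q ^ (n - 1)) -
          casD q a b c d φ ψ (zm * q ^ (k - 1))) /
        ((γ₁ + γ₁⁻¹) - (γ₂ + γ₂⁻¹)))) := by
  obtain ⟨ha, hb, hc, hd, -, hpoles, -, -⟩ := hP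
  obtain ⟨hLφ, ⟨φ₀, hφ₀m, hφ₀p⟩, ⟨φ₁, hφ₁m, hφ₁p⟩⟩ := hφ
  obtain ⟨hLψ, ⟨ψ₀, hψ₀m, hψ₀p⟩, ⟨ψ₁, hψ₁m, hψ₁p⟩⟩ := hψ
  have hpoles_p : ∀ α ∈ ({a, b, c, d} : Set ℂ), ∀ k : ℤ, α ≠ (zp : ℂ)⁻¹ * (q : ℂ) ^ k :=
    fun α hα k => (hpoles α hα k).1
  have hpoles_m : ∀ α ∈ ({a, b, c, d} : Set ℂ), ∀ k : ℤ, α ≠ (zm : ℂ)⁻¹ * (q : ℂ) ^ k :=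
    fun α hα k => (hpoles α hα k).2
  have hp := tendsto_green_sum_Icc hq0 hq1 ha hb hc hd hzp.ne' (hpoles_p c (by simp))
    (hpoles_p d (by simp)) (fun j => hLφ _ ⟨j, .inr rfl⟩) (fun j => hLψ _ ⟨j, .inr rfl⟩) hμ
    (tendsto_casD_mul_zpow hq0 hq1 hzp.ne' hpoles_p hφ₀p hψ₀p hφ₁p hψ₁p) n
  have hm := tendsto_green_sum_Icc hq0 hq1 ha hb hc hd hzm.ne (hpoles_m c (by simp))
    (hpoles_m d (by simp)) (fun j => hLφ _ ⟨j, .inl rfl⟩) (fun j => hLψ _ ⟨j, .inl rfl⟩) hμ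
    (tendsto_casD_mul_zpow hq0 hq1 hzm.ne hpoles_m hφ₀m hψ₀m hφ₁m hψ₁m) k
  have h := (hp.comp tendsto_snd).sub (hm.comp tendsto_fst)
  rw [prod_atTop_atTop_eq] at h
  convert h using 2
  · simp only [trunc, Complex.conj_conj, Function.comp]
    ring
  · ring

/-- Green's formula for the truncated inner product of two
eigenfunctions with distinct eigenvalues. -/
theorem statement18 (q zm zp : ℝ) (a b c d : ℂ)
    (hq0 : 0 < q) (hq1 : q < 1) (hzm : zm < 0) (hzp : 0 < zp)
    (hP : memP q zm zp a b c d) (γ₁ γ₂ : ℂ) (hγ₁ : γ₁ ≠ 0) (hγ₂ : γ₂ ≠ 0)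
    (hμ : γ₁ + γ₁⁻¹ ≠ γ₂ + γ₂⁻¹) (φ ψ : ℝ → ℂ)
    (hφ : memV q zm zp a b c d (γ₁ + γ₁⁻¹) φ)
    (hψ : memV q zm zp a b c d (γ₂ + γ₂⁻¹) ψ) (k n : ℤ) :
    Tendsto
      (fun lm : ℤ × ℤ =>
        trunc q zm zp a b c d φ (fun x => (starRingEnd ℂ) (ψ x)) k lm.1 lm.2 n)
      atTop
      (nhds ((casD q a b c d φ ψ (zp * q ^ (n - 1)) -
          casD q a b c d φ ψ (zm * q ^ (k - 1))) /
        ((γ₁ + γ₁⁻¹) - (γ₂ + γ₂⁻¹)))) :=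
  statement18_general q zm zp a b c d hq0 hq1 hzm hzp hP γ₁ γ₂ hμ φ ψ hφ hψ k n
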